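/- arXiv:1801.00400 — 2 statements merged into one kernel-verified Lean document; each statement's English description precedes it below -/
import Mathlib

section
/- Assume the standing hypotheses (H1)–(H7). Then for every (t,ξ) ∈ ℝ₊ × E, sup_{x ∈ 𝒜_(t,ξ)} |V(T, x(T))| → 0 as T → ∞. -/
open Filter Topology MeasureTheory Set

variable {E : Type*} [NormedAddCommGroup E] [NormedSpace ℝ E]

/-- An arc: an element of `W^{1,1}_loc(ℝ₊,E)`, recorded together with its
a.e. strong derivative. -/
structure Arc (E : Type*) [NormedAddCommGroup E] [NormedSpace ℝ E] where
  x : ℝ → E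
  dx : ℝ → E
  locInt : ∀ T : ℝ, IntegrableOn dx (Icc 0 T) volume
  deriv_ae : ∀ᵐ t ∂(volume.restrict (Ioi (0:ℝ))), HasDerivAt x (dx t) t
  fund : ∀ t : ℝ, 0 ≤ t → x t = x 0 + ∫ s in (0:ℝ)..t, dx s

/-- The admissible trajectories `𝒜_(t,ξ)`. -/
def Admissible (Γ : ℝ → E → Set E) (t : ℝ) (ξ : E) (a : Arc E) : Prop :=
  a.x t = ξ ∧ ∀ᵐ s ∂(volume.restrict (Ici t)), a.dx s ∈ Γ s (a.x s)

/-- The value function `V(t,ξ) = inf_{x ∈ 𝒜_(t,ξ)} ∫_t^∞ L(s,x(s),ẋ(s))ds`,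
the infimum being taken over admissible trajectories whose improper integral
`lim_{T→∞} ∫_t^T` exists. -/
noncomputable def valueFun (L : ℝ → E → E → ℝ) (Γ : ℝ → E → Set E) (t : ℝ) (ξ : E) : ℝ :=
  sInf {r : ℝ | ∃ a : Arc E, Admissible Γ t ξ a ∧
    Tendsto (fun T : ℝ => ∫ s in t..T, L s (a.x s) (a.dx s)) atTop (𝓝 r)}

/-- `a` is an optimal trajectory for the problem starting at time `0` from `ξ0`:
it is admissible and `∫_0^∞ L(s,a(s),ȧ(s))ds = V(0,ξ0)` (a finite real number). -/
def OptimalFrom (L : ℝ → E → E → ℝ) (Γ : ℝ → E → Set E) (ξ0 : E) (a : Arc E) : Prop :=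
  Admissible Γ 0 ξ0 a ∧
  Tendsto (fun T : ℝ => ∫ s in (0:ℝ)..T, L s (a.x s) (a.dx s)) atTop
    (𝓝 (valueFun L Γ 0 ξ0))

/-- (H1) admissible trajectories exist from every initial condition. -/
def Hyp1 (Γ : ℝ → E → Set E) : Prop :=
  ∀ t : ℝ, 0 ≤ t → ∀ ξ : E, ∃ a : Arc E, Admissible Γ t ξ a

/-- (H2) `L(·,x,y)` is measurable. -/
def Hyp2 (L : ℝ → E → E → ℝ) : Prop :=
  ∀ x y : E, Measurable (fun t : ℝ => L t x y)

/-- (H3) Lipschitz and integrability conditions on `L` with moduli `l0, l1, l2`. -/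
def Hyp3 (L : ℝ → E → E → ℝ) (l0 l1 l2 : ℝ → ℝ) : Prop :=
  (∀ t : ℝ, 0 ≤ l0 t ∧ 0 ≤ l1 t ∧ 0 ≤ l2 t) ∧
  IntegrableOn l0 (Ici 0) volume ∧ IntegrableOn l1 (Ici 0) volume ∧
  IntegrableOn l2 (Ici 0) volume ∧
  (∀ T : ℝ, ∃ M : ℝ, ∀ t ∈ Icc (0:ℝ) T, l2 t ≤ M) ∧
  ∀ᵐ t ∂(volume.restrict (Ici (0:ℝ))),
    |L t 0 0| ≤ l0 t ∧
    ∀ x y x' y' : E, |L t x y - L t x' y'| ≤ l1 t * ‖x - x'‖ + l2 t * ‖y - y'‖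

/-- (H4) `Γ` has nonempty closed values. -/
def Hyp4 (Γ : ℝ → E → Set E) : Prop :=
  ∀ t : ℝ, 0 ≤ t → ∀ x : E, (Γ t x).Nonempty ∧ IsClosed (Γ t x)

/-- (H5) `Γ(·,x)` is measurable. -/
def Hyp5 (Γ : ℝ → E → Set E) : Prop :=
  ∀ x : E, ∀ U : Set E, IsOpen U → MeasurableSet {t : ℝ | 0 ≤ t ∧ (Γ t x ∩ U).Nonempty}

/-- (H5') `Γ(·,x)` is lower semicontinuous. -/
def Hyp5' (Γ : ℝ → E → Set E) : Prop :=
  ∀ x : E, ∀ U : Set E, IsOpen U → ∀ t : ℝ, 0 ≤ t → (Γ t x ∩ U).Nonempty →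
    ∃ ε > (0:ℝ), ∀ s : ℝ, 0 ≤ s → |s - t| < ε → (Γ s x ∩ U).Nonempty

/-- (H6) boundedness and Lipschitz continuity of `Γ` with moduli `γ0, γ1`. -/
def Hyp6 (Γ : ℝ → E → Set E) (γ0 γ1 : ℝ → ℝ) : Prop :=
  (∀ t : ℝ, 0 ≤ γ0 t ∧ 0 ≤ γ1 t) ∧
  (∀ T : ℝ, IntegrableOn γ0 (Icc 0 T) volume) ∧
  (∀ T : ℝ, IntegrableOn γ1 (Icc 0 T) volume) ∧
  (∀ t : ℝ, 0 ≤ t → ∀ y ∈ Γ t 0, ‖y‖ ≤ γ0 t) ∧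
  (∀ t : ℝ, 0 ≤ t → ∀ x x' : E, ∀ y ∈ Γ t x, ∃ y' ∈ Γ t x', ‖y - y'‖ ≤ γ1 t * ‖x - x'‖)

/-- (H7) integrability conditions on the Lipschitz moduli. -/
def Hyp7 (l1 l2 γ0 γ1 : ℝ → ℝ) : Prop :=
  IntegrableOn (fun s : ℝ => Real.exp (∫ τ in (0:ℝ)..s, γ1 τ) *
    (1 + ∫ τ in (0:ℝ)..s, γ0 τ) * (l1 s + l2 s * γ1 s)) (Ici 0) volume ∧
  IntegrableOn (fun s : ℝ => l2 s * γ0 s) (Ici 0) volume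

/-!
Gronwall's inequality in integral form, applied to `‖ẋ‖ ≤ γ₀ + γ₁ ‖x‖` from (H6), bounds every
trajectory that starts, at some time `T ≥ t`, on a trajectory admissible from `(t, ξ)` by
`(‖ξ‖ + 1) exp(∫₀^τ γ₁) (1 + ∫₀^τ γ₀)`. By (H3) the Lagrangian along it is then dominated by a
function of `τ` alone that does not depend on `T`, integrable by (H7). Every cost whose infimum is
`V(T, x(T))` is thus at most the tail `∫_T^∞` of this function, which tends to `0`.
-/

section Gronwall

variable {u F G : ℝ → ℝ} {a s : ℝ}

theorem le_add_mul_inv_one_sub_of_le_add_mul {x y D δ : ℝ} (hδ : δ < 1)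
    (h : y ≤ x + D + δ * y) : y ≤ (x + D) * (1 - δ)⁻¹ := by
  rw [← div_eq_mul_inv, le_div_iff₀ (sub_pos.2 hδ)]
  linarith

theorem le_mul_inv_one_sub_pow_of_forall_le_add_mul (has : a ≤ s) (hF : MonotoneOn F (Icc a s))
    (hG : ContinuousOn G (Icc a s)) (hGas : G a ≤ G s)
    (hstep : ∀ p ∈ Icc a s, ∀ q ∈ Icc p s, u q ≤ u p + (F q - F p) + (G q - G p) * u q)
    {n : ℕ} (hn : 0 < n) (hδ : (G s - G a) / n < 1) :
    u s ≤ (u a + (F s - F a)) * ((1 - (G s - G a) / n)⁻¹) ^ n := by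
  set δ := (G s - G a) / n with hδ_def
  set B := (1 - δ)⁻¹
  have hδ0 : 0 ≤ δ := div_nonneg (sub_nonneg.2 hGas) n.cast_nonneg
  have hB : 1 ≤ B := one_le_inv₀ (by linarith) |>.2 (by linarith)
  have hnδ : G a + n * δ = G s := by
    rw [hδ_def, mul_div_cancel₀ _ (by positivity)]; ring
  -- The points `c` are chosen by the intermediate value theorem so that `G` increases by
  -- exactly `δ` from one to the next.
  have key : ∀ i ≤ n, ∃ c ∈ Icc a s,
      G c = G a + i * δ ∧ u c ≤ (u a + (F c - F a)) * B ^ i := by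
    intro i
    induction i with
    | zero => exact fun _ => ⟨a, left_mem_Icc.2 has, by simp, by simp⟩
    | succ i ih =>
      intro hi
      obtain ⟨c, hc, hGc, huc⟩ := ih (by omega)
      have hlevel : G a + (i + 1 : ℕ) * δ ∈ Icc (G c) (G s) := by
        refine ⟨by rw [hGc]; push_cast; linarith, ?_⟩
        rw [← hnδ]; gcongr
      obtain ⟨c', hc', hGc'⟩ :=
        intermediate_value_Icc hc.2 (hG.mono (Icc_subset_Icc_left hc.1)) hlevel
      have hc's : c' ∈ Icc a s := ⟨hc.1.trans hc'.1, hc'.2⟩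
      have hinc : G c' - G c = δ := by rw [hGc', hGc]; push_cast; ring
      have hFcc' : 0 ≤ F c' - F c := sub_nonneg.2 (hF hc hc's hc'.1)
      have hBi : 1 ≤ B ^ i := one_le_pow₀ hB
      refine ⟨c', hc's, hGc', ?_⟩
      have h := hstep c hc c' hc'
      rw [hinc] at h
      calc u c' ≤ (u c + (F c' - F c)) * B := le_add_mul_inv_one_sub_of_le_add_mul hδ h
        _ ≤ ((u a + (F c - F a)) * B ^ i + (F c' - F c) * B ^ i) * B := by
            gcongr; nlinarith
        _ = (u a + (F c' - F a)) * B ^ (i + 1) := by ring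
  obtain ⟨c, hc, hGc, huc⟩ := key n le_rfl
  have h := hstep c hc s ⟨hc.2, le_rfl⟩
  rw [hGc, hnδ, sub_self, zero_mul, add_zero] at h
  have hFcs : 0 ≤ F s - F c := sub_nonneg.2 (hF hc (right_mem_Icc.2 has) hc.2)
  have hBn : 1 ≤ B ^ n := one_le_pow₀ hB
  calc u s ≤ (u a + (F c - F a)) * B ^ n + (F s - F c) * B ^ n := by nlinarith
    _ = (u a + (F s - F a)) * B ^ n := by ring

theorem le_mul_exp_of_forall_le_add_mul (has : a ≤ s) (hF : MonotoneOn F (Icc a s))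
    (hG : ContinuousOn G (Icc a s)) (hGas : G a ≤ G s)
    (hstep : ∀ p ∈ Icc a s, ∀ q ∈ Icc p s, u q ≤ u p + (F q - F p) + (G q - G p) * u q) :
    u s ≤ (u a + (F s - F a)) * Real.exp (G s - G a) := by
  set Θ := G s - G a
  have hlim : Tendsto (fun n : ℕ => (u a + (F s - F a)) * ((1 - Θ / n)⁻¹) ^ n) atTop
      (𝓝 ((u a + (F s - F a)) * Real.exp Θ)) := by
    have h := (Real.tendsto_one_add_div_pow_exp (-Θ)).inv₀ (Real.exp_pos _).ne'
    rw [Real.exp_neg, inv_inv] at h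
    refine (h.const_mul _).congr fun n => ?_
    rw [inv_pow, neg_div, ← sub_eq_add_neg]
  refine ge_of_tendsto hlim ?_
  filter_upwards [(tendsto_const_div_atTop_nhds_zero_nat Θ).eventually_lt_const one_pos,
    eventually_gt_atTop 0] with n hδ hn
  exact le_mul_inv_one_sub_pow_of_forall_le_add_mul has hF hG hGas hstep hn hδ

end Gronwall

open intervalIntegral in
theorem monotoneOn_primitive_of_nonneg {g : ℝ → ℝ} {a s : ℝ} (hg : 0 ≤ g)
    (hgi : IntervalIntegrable g volume a s) :
    MonotoneOn (fun r => ∫ τ in a..r, g τ) (Icc a s) := by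
  intro p hp q hq hpq
  have hsub : ∀ r ∈ Icc a s, IntervalIntegrable g volume a r := fun r hr =>
    hgi.mono_set (uIcc_subset_uIcc left_mem_uIcc (Icc_subset_uIcc hr))
  rw [← sub_nonneg, integral_interval_sub_left (hsub q hq) (hsub p hp)]
  exact integral_nonneg_of_forall hpq hg

theorem intervalIntegrable_of_forall_integrableOn_Icc {F : Type*} [NormedAddCommGroup F]
    {g : ℝ → F} (hg : ∀ T, IntegrableOn g (Icc 0 T)) {p q : ℝ} (hp : 0 ≤ p) (hpq : p ≤ q) :
    IntervalIntegrable g volume p q :=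
  (intervalIntegrable_iff_integrableOn_Icc_of_le hpq).2
    ((hg q).mono_set (Icc_subset_Icc_left hp))

theorem add_mul_exp_le_of_le_add_mul_exp {N₀ N₁ P Q P' Q' : ℝ} (hQ : 0 ≤ Q) (hP' : 0 ≤ P')
    (h : N₁ ≤ (N₀ + P) * Real.exp P') :
    (N₁ + Q) * Real.exp Q' ≤ (N₀ + (P + Q)) * Real.exp (P' + Q') := by
  rw [Real.exp_add, ← mul_assoc]
  gcongr
  calc N₁ + Q ≤ (N₀ + P) * Real.exp P' + Q * Real.exp P' :=
        add_le_add h (le_mul_of_one_le_right hQ (Real.one_le_exp hP'))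
    _ = (N₀ + (P + Q)) * Real.exp P' := by ring

theorem abs_sInf_le_of_forall_abs_le {S : Set ℝ} {ε : ℝ} (hε : 0 ≤ ε)
    (h : ∀ r ∈ S, |r| ≤ ε) : |sInf S| ≤ ε := by
  rcases S.eq_empty_or_nonempty with rfl | ⟨r, hr⟩
  · simpa using hε
  have hlower : ∀ r ∈ S, -ε ≤ r := fun r hr => (abs_le.1 (h r hr)).1
  exact abs_le.2 ⟨le_csInf ⟨r, hr⟩ hlower,
    (csInf_le ⟨-ε, hlower⟩ hr).trans (abs_le.1 (h r hr)).2⟩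

theorem tendsto_setIntegral_Ioi_zero {f : ℝ → ℝ} {a : ℝ} (hf : IntegrableOn f (Ioi a)) :
    Tendsto (fun T => ∫ τ in Ioi T, f τ) atTop (𝓝 0) := by
  have h := tendsto_setIntegral_of_antitone (fun T => measurableSet_Ioi)
    (fun _ _ hTT' => Ioi_subset_Ioi hTT') ⟨a, hf⟩
  have hempty : ⋂ T : ℝ, Ioi T = ∅ := iInter_eq_empty_iff.2 fun x => ⟨x, lt_irrefl x⟩
  rwa [hempty, Measure.restrict_empty, integral_zero_measure] at h

theorem abs_le_setIntegral_Ioi_of_tendsto {f M : ℝ → ℝ} {T r : ℝ}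
    (hM : IntegrableOn M (Ioi T)) (hfM : ∀ᵐ τ ∂volume.restrict (Ioi T), |f τ| ≤ M τ)
    (hf : Tendsto (fun T' => ∫ τ in T..T', f τ) atTop (𝓝 r)) :
    |r| ≤ ∫ τ in Ioi T, M τ := by
  refine le_of_tendsto hf.abs (eventually_atTop.2 ⟨T, fun T' hTT' => ?_⟩)
  have hfM' : ∀ᵐ τ, τ ∈ Ioc T T' → ‖f τ‖ ≤ M τ :=
    (ae_restrict_iff' measurableSet_Ioc).1
      (ae_restrict_of_ae_restrict_of_subset Ioc_subset_Ioi_self hfM)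
  have hM0 : 0 ≤ᵐ[volume.restrict (Ioi T)] M := hfM.mono fun τ hτ => (abs_nonneg _).trans hτ
  calc |∫ τ in T..T', f τ| ≤ ∫ τ in T..T', M τ :=
        intervalIntegral.norm_integral_le_of_norm_le hTT' hfM'
          ((intervalIntegrable_iff_integrableOn_Ioc_of_le hTT').2
            (hM.mono_set Ioc_subset_Ioi_self))
    _ ≤ ∫ τ in Ioi T, M τ := by
        rw [intervalIntegral.integral_of_le hTT']
        exact setIntegral_mono_set hM hM0 Ioc_subset_Ioi_self.eventuallyLE

namespace Arc

open intervalIntegral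

theorem x_eq_add_integral (c : Arc E) {p q : ℝ} (hp : 0 ≤ p) (hpq : p ≤ q) :
    c.x q = c.x p + ∫ τ in p..q, c.dx τ := by
  rw [c.fund q (hp.trans hpq), c.fund p hp, add_assoc, integral_add_adjacent_intervals
    (intervalIntegrable_of_forall_integrableOn_Icc c.locInt le_rfl hp)
    (intervalIntegrable_of_forall_integrableOn_Icc c.locInt hp hpq)]

theorem norm_x_le_add_integral (c : Arc E) {p q : ℝ} (hp : 0 ≤ p) (hpq : p ≤ q) :
    ‖c.x q‖ ≤ ‖c.x p‖ + ∫ τ in p..q, ‖c.dx τ‖ := by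
  rw [c.x_eq_add_integral hp hpq]
  exact (norm_add_le _ _).trans (add_le_add le_rfl (norm_integral_le_integral_norm hpq))

theorem norm_x_le_gronwall (c : Arc E) {g0 g1 : ℝ → ℝ} {a s : ℝ} (ha : 0 ≤ a) (has : a ≤ s)
    (hg0 : 0 ≤ g0) (hg1 : 0 ≤ g1) (hg0i : IntervalIntegrable g0 volume a s)
    (hg1i : IntervalIntegrable g1 volume a s)
    (hbound : ∀ᵐ τ ∂volume.restrict (Icc a s), ‖c.dx τ‖ ≤ g0 τ + g1 τ * ‖c.x τ‖) :
    ‖c.x s‖ ≤ (‖c.x a‖ + ∫ τ in a..s, g0 τ) * Real.exp (∫ τ in a..s, g1 τ) := by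
  set u : ℝ → ℝ := fun r => ‖c.x a‖ + ∫ τ in a..r, ‖c.dx τ‖ with hu
  have hdxi : IntervalIntegrable (fun τ => ‖c.dx τ‖) volume a s :=
    (intervalIntegrable_of_forall_integrableOn_Icc c.locInt ha has).norm
  have hsub : ∀ {g : ℝ → ℝ}, IntervalIntegrable g volume a s →
      ∀ p ∈ Icc a s, ∀ q ∈ Icc p s, IntervalIntegrable g volume p q ∧
        (∫ τ in a..q, g τ) - (∫ τ in a..p, g τ) = ∫ τ in p..q, g τ := by
    intro g hg p hp q hq
    have hmono : ∀ r ∈ Icc a s, ∀ r' ∈ Icc a s, IntervalIntegrable g volume r r' :=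
      fun r hr r' hr' =>
        hg.mono_set (uIcc_subset_uIcc (Icc_subset_uIcc hr) (Icc_subset_uIcc hr'))
    have hq' : q ∈ Icc a s := ⟨hp.1.trans hq.1, hq.2⟩
    exact ⟨hmono p hp q hq', integral_interval_sub_left
      (hmono a (left_mem_Icc.2 has) q hq') (hmono a (left_mem_Icc.2 has) p hp)⟩
  have hu_mono : MonotoneOn u (Icc a s) :=
    fun p hp q hq hpq => add_le_add le_rfl
      (monotoneOn_primitive_of_nonneg (fun _ => norm_nonneg _) hdxi hp hq hpq)
  refine (c.norm_x_le_add_integral ha has).trans ?_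
  have hstep : ∀ p ∈ Icc a s, ∀ q ∈ Icc p s, u q ≤ u p +
      ((∫ τ in a..q, g0 τ) - ∫ τ in a..p, g0 τ) +
      ((∫ τ in a..q, g1 τ) - ∫ τ in a..p, g1 τ) * u q := by
    intro p hp q hq
    have hq' : q ∈ Icc a s := ⟨hp.1.trans hq.1, hq.2⟩
    obtain ⟨hdxpq, hdx_eq⟩ := hsub hdxi p hp q hq
    obtain ⟨hg0pq, hg0_eq⟩ := hsub hg0i p hp q hq
    obtain ⟨hg1pq, hg1_eq⟩ := hsub hg1i p hp q hq
    have hbound' : ∀ᵐ τ ∂volume.restrict (Icc p q), ‖c.dx τ‖ ≤ g0 τ + g1 τ * u q := by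
      filter_upwards [ae_restrict_of_ae_restrict_of_subset (Icc_subset_Icc hp.1 hq.2) hbound,
        ae_restrict_mem measurableSet_Icc] with τ hτ hτpq
      have hτ' : τ ∈ Icc a s := ⟨hp.1.trans hτpq.1, hτpq.2.trans hq.2⟩
      have hxu : ‖c.x τ‖ ≤ u q :=
        (c.norm_x_le_add_integral ha hτ'.1).trans (hu_mono hτ' hq' hτpq.2)
      exact hτ.trans (add_le_add le_rfl (mul_le_mul_of_nonneg_left hxu (hg1 τ)))
    have hint :=
      integral_mono_ae_restrict hq.1 hdxpq (hg0pq.add (hg1pq.mul_const (u q))) hbound'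
    rw [integral_add hg0pq (hg1pq.mul_const _), intervalIntegral.integral_mul_const] at hint
    simp only [hu, hg0_eq, hg1_eq]
    linarith
  have h := le_mul_exp_of_forall_le_add_mul has (monotoneOn_primitive_of_nonneg hg0 hg0i)
    (continuousOn_primitive_interval' hg1i left_mem_uIcc |>.mono Icc_subset_uIcc)
    (monotoneOn_primitive_of_nonneg hg1 hg1i (left_mem_Icc.2 has) (right_mem_Icc.2 has) has)
    hstep
  simpa [hu] using h

end Arc

theorem Hyp6.norm_le {F : Type*} [NormedAddCommGroup F] {Γ : ℝ → F → Set F}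
    {γ0 γ1 : ℝ → ℝ} (h6 : Hyp6 Γ γ0 γ1) {τ : ℝ} (hτ : 0 ≤ τ) {x y : F} (hy : y ∈ Γ τ x) :
    ‖y‖ ≤ γ0 τ + γ1 τ * ‖x‖ := by
  obtain ⟨y₀, hy₀, hyy₀⟩ := h6.2.2.2.2 τ hτ x 0 y hy
  rw [sub_zero] at hyy₀
  calc ‖y‖ ≤ ‖y₀‖ + ‖y - y₀‖ := norm_le_insert' y y₀
    _ ≤ γ0 τ + γ1 τ * ‖x‖ := add_le_add (h6.2.2.2.1 τ hτ y₀ hy₀) hyy₀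

noncomputable def lagrangianMajorant (l0 l1 l2 γ0 γ1 : ℝ → ℝ) (C τ : ℝ) : ℝ :=
  l0 τ + C * (Real.exp (∫ r in (0:ℝ)..τ, γ1 r) * (1 + ∫ r in (0:ℝ)..τ, γ0 r) *
    (l1 τ + l2 τ * γ1 τ)) + l2 τ * γ0 τ

theorem integrableOn_lagrangianMajorant {l0 l1 l2 γ0 γ1 : ℝ → ℝ}
    (hl0 : IntegrableOn l0 (Ici 0)) (h7 : Hyp7 l1 l2 γ0 γ1) (C : ℝ) :
    IntegrableOn (lagrangianMajorant l0 l1 l2 γ0 γ1 C) (Ici 0) :=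
  (hl0.add (h7.1.const_mul C)).add h7.2

theorem abs_le_lagrangianMajorant {F : Type*} [NormedAddCommGroup F] {L : ℝ → F → F → ℝ}
    {Γ : ℝ → F → Set F} {l0 l1 l2 γ0 γ1 : ℝ → ℝ} (h6 : Hyp6 Γ γ0 γ1) {τ C : ℝ} (hτ : 0 ≤ τ)
    (hl1 : 0 ≤ l1 τ) (hl2 : 0 ≤ l2 τ) (hL0 : |L τ 0 0| ≤ l0 τ)
    (hL : ∀ x y x' y' : F, |L τ x y - L τ x' y'| ≤ l1 τ * ‖x - x'‖ + l2 τ * ‖y - y'‖)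
    {x y : F} (hy : y ∈ Γ τ x)
    (hx : ‖x‖ ≤ C * (Real.exp (∫ r in (0:ℝ)..τ, γ1 r) * (1 + ∫ r in (0:ℝ)..τ, γ0 r))) :
    |L τ x y| ≤ lagrangianMajorant l0 l1 l2 γ0 γ1 C τ := by
  have hLxy := hL x y 0 0
  rw [sub_zero, sub_zero] at hLxy
  have hy' := h6.norm_le hτ hy
  have hcoef : 0 ≤ l1 τ + l2 τ * γ1 τ := add_nonneg hl1 (mul_nonneg hl2 (h6.1 τ).2)
  calc |L τ x y| ≤ |L τ x y - L τ 0 0| + |L τ 0 0| := by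
        linarith [abs_sub_abs_le_abs_sub (L τ x y) (L τ 0 0)]
    _ ≤ l0 τ + (l1 τ + l2 τ * γ1 τ) * ‖x‖ + l2 τ * γ0 τ := by nlinarith
    _ ≤ lagrangianMajorant l0 l1 l2 γ0 γ1 C τ := by
        unfold lagrangianMajorant
        nlinarith [mul_le_mul_of_nonneg_left hx hcoef]

section OptimalControl

variable {L : ℝ → E → E → ℝ} {Γ : ℝ → E → Set E} {l0 l1 l2 γ0 γ1 : ℝ → ℝ}

theorem Hyp6.norm_x_le_of_admissible (h6 : Hyp6 Γ γ0 γ1) {c : Arc E} {a s : ℝ} {ξ : E}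
    (hc : Admissible Γ a ξ c) (ha : 0 ≤ a) (has : a ≤ s) :
    ‖c.x s‖ ≤ (‖ξ‖ + ∫ τ in a..s, γ0 τ) * Real.exp (∫ τ in a..s, γ1 τ) := by
  rw [← hc.1]
  refine c.norm_x_le_gronwall ha has (fun τ => (h6.1 τ).1) (fun τ => (h6.1 τ).2)
    (intervalIntegrable_of_forall_integrableOn_Icc h6.2.1 ha has)
    (intervalIntegrable_of_forall_integrableOn_Icc h6.2.2.1 ha has) ?_
  filter_upwards [ae_restrict_of_ae_restrict_of_subset Icc_subset_Ici_self hc.2,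
    ae_restrict_mem measurableSet_Icc] with τ hτ hτas
  exact h6.norm_le (ha.trans hτas.1) hτ

open intervalIntegral in
theorem Hyp6.norm_x_le_of_admissible_from_admissible (h6 : Hyp6 Γ γ0 γ1) {a b : Arc E} {t T τ : ℝ}
    {ξ : E} (ha : Admissible Γ t ξ a) (hb : Admissible Γ T (a.x T) b) (ht : 0 ≤ t) (htT : t ≤ T)
    (hTτ : T ≤ τ) :
    ‖b.x τ‖ ≤
      (‖ξ‖ + 1) * (Real.exp (∫ r in (0:ℝ)..τ, γ1 r) * (1 + ∫ r in (0:ℝ)..τ, γ0 r)) := by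
  have hT : 0 ≤ T := ht.trans htT
  have hint : ∀ {g : ℝ → ℝ}, (∀ T, IntegrableOn g (Icc 0 T)) → ∀ {p q : ℝ}, 0 ≤ p → p ≤ q →
      IntervalIntegrable g volume p q :=
    intervalIntegrable_of_forall_integrableOn_Icc
  have hγ0 : 0 ≤ γ0 := fun r => (h6.1 r).1
  have hγ1 : 0 ≤ γ1 := fun r => (h6.1 r).2
  have hmono : ∀ {g : ℝ → ℝ}, 0 ≤ g → (∀ T, IntegrableOn g (Icc 0 T)) →
      ∫ r in t..τ, g r ≤ ∫ r in (0:ℝ)..τ, g r := fun hg hgi =>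
    integral_mono_interval ht (htT.trans hTτ) le_rfl (ae_of_all _ hg)
      (hint hgi le_rfl (ht.trans (htT.trans hTτ)))
  have hI0 : 0 ≤ ∫ r in (0:ℝ)..τ, γ0 r := integral_nonneg_of_forall (hT.trans hTτ) hγ0
  calc ‖b.x τ‖ ≤ (‖a.x T‖ + ∫ r in T..τ, γ0 r) * Real.exp (∫ r in T..τ, γ1 r) :=
        h6.norm_x_le_of_admissible hb hT hTτ
    _ ≤ (‖ξ‖ + ((∫ r in t..T, γ0 r) + ∫ r in T..τ, γ0 r)) *
          Real.exp ((∫ r in t..T, γ1 r) + ∫ r in T..τ, γ1 r) :=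
        add_mul_exp_le_of_le_add_mul_exp (integral_nonneg_of_forall hTτ hγ0)
          (integral_nonneg_of_forall htT hγ1) (h6.norm_x_le_of_admissible ha ht htT)
    _ = (‖ξ‖ + ∫ r in t..τ, γ0 r) * Real.exp (∫ r in t..τ, γ1 r) := by
        rw [integral_add_adjacent_intervals (hint h6.2.1 ht htT) (hint h6.2.1 hT hTτ),
          integral_add_adjacent_intervals (hint h6.2.2.1 ht htT) (hint h6.2.2.1 hT hTτ)]
    _ ≤ (‖ξ‖ + ∫ r in (0:ℝ)..τ, γ0 r) * Real.exp (∫ r in (0:ℝ)..τ, γ1 r) := by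
        gcongr
        · exact hmono hγ0 h6.2.1
        · exact hmono hγ1 h6.2.2.1
    _ ≤ (‖ξ‖ + 1) * (Real.exp (∫ r in (0:ℝ)..τ, γ1 r) * (1 + ∫ r in (0:ℝ)..τ, γ0 r)) := by
        rw [mul_left_comm, mul_comm]
        gcongr
        nlinarith [norm_nonneg ξ]

theorem ae_abs_lagrangian_le_lagrangianMajorant (h3 : Hyp3 L l0 l1 l2) (h6 : Hyp6 Γ γ0 γ1)
    {a b : Arc E} {t T : ℝ} {ξ : E} (ha : Admissible Γ t ξ a) (hb : Admissible Γ T (a.x T) b)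
    (ht : 0 ≤ t) (htT : t ≤ T) :
    ∀ᵐ τ ∂volume.restrict (Ioi T),
      |L τ (b.x τ) (b.dx τ)| ≤ lagrangianMajorant l0 l1 l2 γ0 γ1 (‖ξ‖ + 1) τ := by
  have hTI : Ioi T ⊆ Ici 0 := fun τ hτ => (ht.trans htT).trans (le_of_lt hτ)
  filter_upwards [ae_restrict_of_ae_restrict_of_subset hTI h3.2.2.2.2.2,
    ae_restrict_of_ae_restrict_of_subset Ioi_subset_Ici_self hb.2,
    ae_restrict_mem measurableSet_Ioi] with τ ⟨hL0, hL⟩ hτb hτ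
  exact abs_le_lagrangianMajorant h6 (hTI hτ) (h3.1 τ).2.1 (h3.1 τ).2.2 hL0 hL hτb
    (h6.norm_x_le_of_admissible_from_admissible ha hb ht htT (le_of_lt hτ))

end OptimalControl

theorem valueFun_tendsto_zero_along_admissible_general
    (L : ℝ → E → E → ℝ) (Γ : ℝ → E → Set E) (l0 l1 l2 γ0 γ1 : ℝ → ℝ)
    (h3 : Hyp3 L l0 l1 l2) (h6 : Hyp6 Γ γ0 γ1) (h7 : Hyp7 l1 l2 γ0 γ1) :
    ∀ t : ℝ, 0 ≤ t → ∀ ξ : E, ∀ ε : ℝ, 0 < ε → ∃ T₀ : ℝ, ∀ T : ℝ, T₀ ≤ T →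
      ∀ a : Arc E, Admissible Γ t ξ a → |valueFun L Γ T (a.x T)| ≤ ε := by
  intro t ht ξ ε hε
  have hM := integrableOn_lagrangianMajorant h3.2.1 h7 (‖ξ‖ + 1)
  obtain ⟨T₁, hT₁⟩ := eventually_atTop.1 <|
    (tendsto_setIntegral_Ioi_zero (hM.mono_set Ioi_subset_Ici_self)).eventually_le_const hε
  refine ⟨max t T₁, fun T hT a ha => abs_sInf_le_of_forall_abs_le hε.le ?_⟩
  rintro r ⟨b, hb, hr⟩
  have htT : t ≤ T := (le_max_left _ _).trans hT
  exact (abs_le_setIntegral_Ioi_of_tendsto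
    (hM.mono_set fun τ hτ => (ht.trans htT).trans hτ.le)
    (ae_abs_lagrangian_le_lagrangianMajorant h3 h6 ha hb ht htT) hr).trans
    (hT₁ T ((le_max_right _ _).trans hT))

/-- Under (H1)–(H7), for every `(t,ξ)`, `sup_{x ∈ 𝒜_(t,ξ)} |V(T,x(T))| → 0` as
`T → ∞`. -/
theorem valueFun_tendsto_zero_along_admissible
    [CompleteSpace E] [TopologicalSpace.SeparableSpace E]
    (L : ℝ → E → E → ℝ) (Γ : ℝ → E → Set E) (l0 l1 l2 γ0 γ1 : ℝ → ℝ)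
    (h1 : Hyp1 Γ) (h2 : Hyp2 L) (h3 : Hyp3 L l0 l1 l2) (h4 : Hyp4 Γ)
    (h5 : Hyp5 Γ) (h6 : Hyp6 Γ γ0 γ1) (h7 : Hyp7 l1 l2 γ0 γ1) :
    ∀ t : ℝ, 0 ≤ t → ∀ ξ : E, ∀ ε : ℝ, 0 < ε → ∃ T₀ : ℝ, ∀ T : ℝ, T₀ ≤ T →
      ∀ a : Arc E, Admissible Γ t ξ a → |valueFun L Γ T (a.x T)| ≤ ε :=
  valueFun_tendsto_zero_along_admissible_general L Γ l0 l1 l2 γ0 γ1 h3 h6 h7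
end

section
/- Let E be a separable Banach space. Then every locally absolutely continuous function p : ℝ₊ → E* possesses a weak* derivative ṗ(t) at a.e. t ∈ ℝ₊; that is, for a.e. t there exists x* ∈ E* such that ⟨(p(t+h) − p(t))/h, x⟩ → ⟨x*, x⟩ as h → 0, for every x ∈ E. -/
open Filter Topology MeasureTheory Set

variable {E : Type*} [NormedAddCommGroup E] [NormedSpace ℝ E]

/-- Local absolute continuity of a function on `ℝ₊`. -/
def LocAbsCont {F : Type*} [NormedAddCommGroup F] (p : ℝ → F) : Prop :=
  ∀ τ : ℝ, 0 < τ → ∀ ε : ℝ, 0 < ε → ∃ δ > (0:ℝ), ∀ n : ℕ, ∀ t s : Fin n → ℝ,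
    (∀ i, 0 ≤ t i ∧ t i ≤ s i ∧ s i ≤ τ) →
    (∀ i j : Fin n, i < j → s i ≤ t j) →
    (∑ i, (s i - t i)) < δ → (∑ i, ‖p (s i) - p (t i)‖) < ε

/-- `q` is the weak* derivative of `p : ℝ₊ → E*` at `t`. -/
def HasWeakStarDerivAt (p : ℝ → E →L[ℝ] ℝ) (q : E →L[ℝ] ℝ) (t : ℝ) : Prop :=
  ∀ x : E, Tendsto (fun h : ℝ => (p (t + h) x - p t x) / h) (𝓝[≠] (0:ℝ)) (𝓝 (q x))

/-!
A locally absolutely continuous `p` has locally bounded variation on `ℝ₊`, so its variation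
function `V` is monotone and dominates it: `‖p τ - p t‖ ≤ |V τ - V t|`. By Lebesgue's theorem, `V`
and each real function `τ ↦ p τ x`, `x` in a countable dense subset of `E`, are differentiable
almost everywhere. At a common point of differentiability `t > 0`, the difference quotients of `p`
are eventually bounded in norm (since `V` is differentiable at `t`) and converge on the dense set.
By Banach–Alaoglu they have a weak* cluster point, and it is unique because it is determined on the
dense set; so the quotients converge weak* to it.
-/

theorem LocAbsCont.eVariationOn_Icc_le {F : Type*} [NormedAddCommGroup F] {p : ℝ → F}
    (hp : LocAbsCont p) {τ ε : ℝ} (hτ : 0 < τ) (hε : 0 < ε) :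
    ∃ δ > (0 : ℝ), ∀ a b : ℝ, 0 ≤ a → b ≤ τ → b - a < δ →
      eVariationOn p (Icc a b) ≤ ENNReal.ofReal ε := by
  obtain ⟨δ, hδ, hp⟩ := hp τ hτ ε hε
  refine ⟨δ, hδ, fun a b ha hb hlen => iSup_le ?_⟩
  rintro ⟨n, u, hu, hus⟩
  have hsum : ∑ i : Fin n, (u (i + 1) - u i) < δ := by
    rw [Fin.sum_univ_eq_sum_range (fun i => u (i + 1) - u i), Finset.sum_range_sub u]
    linarith [(hus n).2, (hus 0).1]
  have hvar := hp n (fun i => u i) (fun i => u (i + 1))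
    (fun i => ⟨ha.trans (hus _).1, hu (Nat.le_succ _), (hus _).2.trans hb⟩)
    (fun i j hij => hu (Nat.succ_le_of_lt hij)) hsum
  rw [Fin.sum_univ_eq_sum_range (fun i => ‖p (u (i + 1)) - p (u i)‖)] at hvar
  simp only [edist_dist, dist_eq_norm]
  rw [← ENNReal.ofReal_sum_of_nonneg fun i _ => norm_nonneg _]
  exact ENNReal.ofReal_le_ofReal hvar.le

theorem LocAbsCont.eVariationOn_Icc_zero_ne_top {F : Type*} [NormedAddCommGroup F] {p : ℝ → F}
    (hp : LocAbsCont p) {τ : ℝ} (hτ : 0 < τ) : eVariationOn p (Icc 0 τ) ≠ ⊤ := by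
  obtain ⟨δ, hδ, hp⟩ := hp.eVariationOn_Icc_le hτ one_pos
  obtain ⟨N, hN⟩ := exists_nat_gt (τ / δ)
  have hN0 : (0 : ℝ) < N := (div_pos hτ hδ).trans hN
  have hstep : τ / N < δ := by rwa [div_lt_iff₀ hN0, mul_comm, ← div_lt_iff₀ hδ]
  let I : ℕ → ℝ := fun i => i * (τ / N)
  have hI : Monotone I := fun i j hij =>
    mul_le_mul_of_nonneg_right (Nat.cast_le.mpr hij) (div_pos hτ hN0).le
  have hsplit := eVariationOn.sum' p hI (n := N)
  rw [show I 0 = 0 by simp [I], show I N = τ by simp [I, mul_div_cancel₀ _ hN0.ne']] at hsplit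
  rw [← hsplit]
  refine ne_top_of_le_ne_top (b := ∑ _i ∈ Finset.range N, ENNReal.ofReal 1) (by simp)
    (Finset.sum_le_sum fun i hi => hp _ _ (by positivity) ?_ ?_)
  · calc I (i + 1) ≤ I N := hI (Finset.mem_range.mp hi)
      _ = τ := by simp [I, mul_div_cancel₀ _ hN0.ne']
  · simpa [I, add_mul] using hstep

theorem LocAbsCont.locallyBoundedVariationOn {F : Type*} [NormedAddCommGroup F] {p : ℝ → F}
    (hp : LocAbsCont p) : LocallyBoundedVariationOn p (Ici 0) := fun _ b _ hb =>
  ne_top_of_le_ne_top (hp.eVariationOn_Icc_zero_ne_top (by linarith [mem_Ici.mp hb]))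
    (eVariationOn.mono _ fun _ hx => ⟨hx.1, hx.2.2.trans (lt_add_one b).le⟩)

theorem dist_le_abs_variationOnFromTo {α X : Type*} [LinearOrder α] [PseudoMetricSpace X]
    {f : α → X} {s : Set α} (hf : LocallyBoundedVariationOn f s) {a b : α} (ha : a ∈ s)
    (hb : b ∈ s) : dist (f a) (f b) ≤ |variationOnFromTo f s a b| := by
  wlog hab : a ≤ b generalizing a b
  · rw [dist_comm, variationOnFromTo.eq_neg_swap, abs_neg]
    exact this hb ha (le_of_not_ge hab)
  rw [variationOnFromTo.eq_of_le f s hab, ENNReal.abs_toReal, dist_edist]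
  exact ENNReal.toReal_mono (hf a b ha hb)
    (eVariationOn.edist_le f ⟨ha, le_rfl, hab⟩ ⟨hb, hab, le_rfl⟩)

theorem StrongDual.exists_tendsto_apply_of_dense {𝕜 X ι : Type*} [NontriviallyNormedField 𝕜]
    [ProperSpace 𝕜] [SeminormedAddCommGroup X] [NormedSpace 𝕜 X] {l : Filter ι} [l.NeBot]
    {Q : ι → StrongDual 𝕜 X} {C : ℝ} (hQ : ∀ᶠ i in l, ‖Q i‖ ≤ C) {s : Set X} (hs : Dense s)
    (hconv : ∀ x ∈ s, ∃ y, Tendsto (fun i => Q i x) l (𝓝 y)) :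
    ∃ q : StrongDual 𝕜 X, ∀ x, Tendsto (fun i => Q i x) l (𝓝 (q x)) := by
  let K := WeakDual.toStrongDual ⁻¹' Metric.closedBall (0 : StrongDual 𝕜 X) C
  have hK : IsCompact K := WeakDual.isCompact_closedBall 0 C
  have hmem : ∀ᶠ i in l, StrongDual.toWeakDual (Q i) ∈ K := by
    filter_upwards [hQ] with i hi
    simpa [K] using hi
  have hcluster : ∀ q : WeakDual 𝕜 X, MapClusterPt q l (StrongDual.toWeakDual ∘ Q) →
      ∀ x ∈ s, Tendsto (fun i => Q i x) l (𝓝 (q x)) := by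
    intro q hq x hx
    obtain ⟨y, hy⟩ := hconv x hx
    have hqx : MapClusterPt (q x) l (fun i => Q i x) :=
      (WeakDual.eval_continuous x).continuousAt.mapClusterPt hq
    suffices q x = y from this ▸ hy
    by_contra hne
    exact (ClusterPt.mono hqx hy).ne (disjoint_nhds_nhds.2 hne).eq_bot
  obtain ⟨q, -, hq⟩ := hK.exists_mapClusterPt_of_frequently hmem.frequently
  have hlim := hK.tendsto_nhds_of_unique_mapClusterPt hmem fun q' _ hq' => by
    refine DFunLike.coe_injective (Continuous.ext_on hs q'.continuous q.continuous fun x hx => ?_)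
    exact tendsto_nhds_unique (hcluster q' hq' x hx) (hcluster q hq x hx)
  exact ⟨WeakDual.toStrongDual q, fun x => ((WeakDual.eval_continuous x).tendsto q).comp hlim⟩

theorem exists_hasWeakStarDerivAt_of_dist_le {p : ℝ → E →L[ℝ] ℝ} {V : ℝ → ℝ} {t : ℝ}
    (hV : DifferentiableAt ℝ V t) (hpV : ∀ᶠ τ in 𝓝 t, dist (p τ) (p t) ≤ |V τ - V t|)
    {s : Set E} (hs : Dense s) (hp : ∀ x ∈ s, DifferentiableAt ℝ (fun τ => p τ x) t) :
    ∃ q, HasWeakStarDerivAt p q t := by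
  have hshift : Tendsto (fun h : ℝ => t + h) (𝓝[≠] 0) (𝓝 t) :=
    tendsto_nhdsWithin_of_tendsto_nhds (by simpa using (continuous_const_add t).tendsto 0)
  obtain ⟨C, hC⟩ := ((hasDerivAt_iff_tendsto_slope_zero.mp hV.hasDerivAt).norm).isBoundedUnder_le
  have hbound : ∀ᶠ h in 𝓝[≠] (0 : ℝ), ‖h⁻¹ • (p (t + h) - p t)‖ ≤ C := by
    filter_upwards [hshift.eventually hpV, eventually_map.mp hC] with h hpVh hVh
    calc ‖h⁻¹ • (p (t + h) - p t)‖ = ‖h⁻¹‖ * dist (p (t + h)) (p t) := by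
          rw [norm_smul, dist_eq_norm]
      _ ≤ ‖h⁻¹‖ * |V (t + h) - V t| := by gcongr
      _ = ‖h⁻¹ • (V (t + h) - V t)‖ := by rw [norm_smul, Real.norm_eq_abs, Real.norm_eq_abs]
      _ ≤ C := hVh
  obtain ⟨q, hq⟩ := StrongDual.exists_tendsto_apply_of_dense hbound hs fun x hx =>
    ⟨_, by simpa using hasDerivAt_iff_tendsto_slope_zero.mp (hp x hx).hasDerivAt⟩
  exact ⟨q, fun x => by simpa [div_eq_inv_mul] using hq x⟩

theorem locAbsCont_hasWeakStarDerivAt_ae_general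
    [TopologicalSpace.SeparableSpace E]
    (p : ℝ → E →L[ℝ] ℝ) (hp : LocAbsCont p) :
    ∀ᵐ t ∂(volume.restrict (Ici (0:ℝ))), ∃ q : E →L[ℝ] ℝ,
      HasWeakStarDerivAt p q t := by
  have hbv := hp.locallyBoundedVariationOn
  obtain ⟨xs, hxs⟩ := TopologicalSpace.exists_dense_seq E
  have hV := (variationOnFromTo.monotoneOn hbv self_mem_Ici).ae_differentiableWithinAt_of_mem
  have hpx (n : ℕ) :=
    ((ContinuousLinearMap.apply ℝ ℝ (xs n)).lipschitz.comp_locallyBoundedVariationOn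
      hbv).ae_differentiableWithinAt_of_mem
  rw [← Measure.restrict_congr_set Ioi_ae_eq_Ici, ae_restrict_iff' measurableSet_Ioi]
  filter_upwards [hV, ae_all_iff.2 hpx] with t hVt hpt (ht : 0 < t)
  have hnhds : Ici 0 ∈ 𝓝 t := Ici_mem_nhds ht
  refine exists_hasWeakStarDerivAt_of_dist_le ((hVt ht.le).differentiableAt hnhds) ?_ hxs
    (forall_mem_range.2 fun n => (hpt n ht.le).differentiableAt hnhds)
  filter_upwards [hnhds] with τ hτ
  rw [variationOnFromTo.sub_right hbv self_mem_Ici hτ ht.le, dist_comm]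
  exact dist_le_abs_variationOnFromTo hbv ht.le hτ

/-- Lemma (Komura): every locally absolutely continuous `p : ℝ₊ → E*` with `E`
separable possesses a weak* derivative almost everywhere. -/
theorem locAbsCont_hasWeakStarDerivAt_ae
    [CompleteSpace E] [TopologicalSpace.SeparableSpace E]
    (p : ℝ → E →L[ℝ] ℝ) (hp : LocAbsCont p) :
    ∀ᵐ t ∂(volume.restrict (Ici (0:ℝ))), ∃ q : E →L[ℝ] ℝ,
      HasWeakStarDerivAt p q t :=
  locAbsCont_hasWeakStarDerivAt_ae_general p hp
end
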